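/- arXiv:1707.03079 — 2 statements merged into one kernel-verified Lean document; each statement's English description precedes it below -/
import Mathlib

section
/- Let k be a number field of degree n over ℚ and let D be a squarefree nonzero ideal of O_k having exactly r distinct prime ideal factors. Then, as real numbers, N(D) ≥ 10^(r − 7n). -/
open NumberField
open scoped Classical

private theorem aux_mem_prime {k : Type*} [Field k] [NumberField k]
    (P : Ideal (𝓞 k)) (hP : P.IsPrime) :
    ∀ N : ℕ, 2 ≤ N → (N : 𝓞 k) ∈ P → ∃ q : ℕ, q.Prime ∧ q ∣ N ∧ (q : 𝓞 k) ∈ P := by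
  intro N
  induction N using Nat.strong_induction_on with
  | _ N ih =>
    intro hN hmem
    obtain ⟨q, hq, m, rfl⟩ : ∃ q, q.Prime ∧ ∃ m, N = q * m := by
      obtain ⟨q, hq, hdvd⟩ := Nat.exists_prime_and_dvd (by omega : N ≠ 1)
      exact ⟨q, hq, hdvd⟩
    have : ((q : 𝓞 k) * (m : 𝓞 k)) ∈ P := by push_cast at hmem ⊢; exact hmem
    rcases hP.mem_or_mem this with h | h
    · exact ⟨q, hq, ⟨m, rfl⟩, h⟩
    · have hq2 := hq.two_le
      have hm1 : m ≠ 1 := by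
        rintro rfl
        exact hP.ne_top (Ideal.eq_top_iff_one _ |>.mpr (by simpa using h))
      have hm0 : m ≠ 0 := by rintro rfl; omega
      obtain ⟨p, hp, hpd, hpm⟩ := ih m (by nlinarith) (by omega) h
      exact ⟨p, hp, hpd.mul_left q, hpm⟩

private theorem aux_count {k : Type*} [Field k] [NumberField k]
    (S : Finset (Ideal (𝓞 k))) (hSp : ∀ P ∈ S, Prime P)
    (q : ℕ) (hq : q.Prime) :
    (S.filter (fun P => (q : 𝓞 k) ∈ P)).card ≤ Module.finrank ℚ k := by
  set n := Module.finrank ℚ k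
  set T := S.filter (fun P => (q : 𝓞 k) ∈ P) with hT
  have hspan : Ideal.absNorm (Ideal.span {(q : 𝓞 k)}) = q ^ n := by
    rw [Ideal.absNorm_span_singleton,
      show ((q : ℕ) : 𝓞 k) = algebraMap ℤ (𝓞 k) (q : ℤ) by push_cast; rfl,
      Algebra.norm_algebraMap_of_basis (RingOfIntegers.basis k),
      ← Module.finrank_eq_card_chooseBasisIndex, RingOfIntegers.rank]
    simp [Int.natAbs_pow]; rfl
  have hdvdP : ∀ P ∈ T, P ∣ Ideal.span {(q : 𝓞 k)} := by
    intro P hP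
    rw [Ideal.dvd_iff_le, Ideal.span_singleton_le_iff_mem]
    exact (Finset.mem_filter.mp hP).2
  have hprod : (∏ P ∈ T, P) ∣ Ideal.span {(q : 𝓞 k)} :=
    Finset.prod_primes_dvd _ (fun P hP => hSp P (Finset.mem_filter.mp hP).1) hdvdP
  have hdvdN : (∏ P ∈ T, Ideal.absNorm P) ∣ q ^ n := by
    rw [← hspan, ← map_prod]
    exact map_dvd Ideal.absNorm hprod
  have hqle : ∀ P ∈ T, q ≤ Ideal.absNorm P := by
    intro P hP
    have h1 : Ideal.absNorm P ∣ q ^ n := by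
      rw [← hspan]; exact map_dvd Ideal.absNorm (hdvdP P hP)
    obtain ⟨j, hj, hje⟩ := (Nat.dvd_prime_pow hq).mp h1
    have hne1 : Ideal.absNorm P ≠ 1 := fun h =>
      (hSp P (Finset.mem_filter.mp hP).1).not_unit
        (by simp [Ideal.isUnit_iff, Ideal.absNorm_eq_one_iff.mp h])
    have hj0 : j ≠ 0 := by rintro rfl; rw [pow_zero] at hje; exact hne1 hje
    calc q = q ^ 1 := (pow_one q).symm
    _ ≤ q ^ j := Nat.pow_le_pow_right hq.pos (by omega)
    _ = Ideal.absNorm P := hje.symm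
  have h2 : q ^ T.card ≤ ∏ P ∈ T, Ideal.absNorm P := by
    rw [← Finset.prod_const]
    exact Finset.prod_le_prod' hqle
  have h3 : (∏ P ∈ T, Ideal.absNorm P) ≤ q ^ n :=
    Nat.le_of_dvd (pow_pos hq.pos n) hdvdN
  exact (Nat.pow_le_pow_iff_right hq.one_lt).mp (h2.trans h3)

/-- For a squarefree nonzero ideal D of O_k with exactly r distinct prime
ideal factors, N(D) ≥ 10^(r − 7n) as real numbers, where n = [k : ℚ]. -/
theorem absNorm_ge_ten_zpow (k : Type*) [Field k] [NumberField k]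
    (D : Ideal (𝓞 k)) (hD : D ≠ 0) (hsf : Squarefree D) (r : ℕ)
    (hr : (UniqueFactorizationMonoid.normalizedFactors D).toFinset.card = r) :
    (10 : ℝ) ^ ((r : ℤ) - 7 * (Module.finrank ℚ k : ℤ)) ≤ (Ideal.absNorm D : ℝ) := by
  set n := Module.finrank ℚ k with hn
  set S := (UniqueFactorizationMonoid.normalizedFactors D).toFinset with hS
  have hSp : ∀ P ∈ S, Prime P := fun P hP =>
    UniqueFactorizationMonoid.prime_of_normalized_factor P
      (Multiset.mem_toFinset.mp hP)
  -- D is the product of the elements of S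
  have hnodup : (UniqueFactorizationMonoid.normalizedFactors D).Nodup :=
    (UniqueFactorizationMonoid.squarefree_iff_nodup_normalizedFactors hD).mp hsf
  have hDprod : (∏ P ∈ S, P) = D := by
    have hval : S.val = UniqueFactorizationMonoid.normalizedFactors D := by
      rw [hS, Multiset.toFinset_val, Multiset.dedup_eq_self.mpr hnodup]
    have hassoc := UniqueFactorizationMonoid.prod_normalizedFactors hD
    rw [Finset.prod_eq_multiset_prod, Multiset.map_id', hval]
    exact associated_iff_eq.mp hassoc
  have hNprod : Ideal.absNorm D = ∏ P ∈ S, Ideal.absNorm P := by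
    rw [← hDprod, map_prod]
  -- small and big factors
  set T := S.filter (fun P => Ideal.absNorm P < 10) with hT
  set B := S.filter (fun P => ¬ Ideal.absNorm P < 10) with hB
  have hcard : T.card + B.card = r := by
    rw [hT, hB, Finset.card_filter_add_card_filter_not, hS, hr]
  -- each small prime contains a rational prime ≤ 7
  have hTsub : T ⊆ (S.filter (fun P => (2 : 𝓞 k) ∈ P)) ∪ (S.filter (fun P => (3 : 𝓞 k) ∈ P))
      ∪ (S.filter (fun P => (5 : 𝓞 k) ∈ P)) ∪ (S.filter (fun P => (7 : 𝓞 k) ∈ P)) := by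
    intro P hP
    obtain ⟨hPS, hPlt⟩ := Finset.mem_filter.mp hP
    have hPprime := hSp P hPS
    have hPIsPrime : P.IsPrime := Ideal.isPrime_of_prime hPprime
    have hP0 : P ≠ 0 := hPprime.ne_zero
    have hN2 : 2 ≤ Ideal.absNorm P := by
      have h0 : Ideal.absNorm P ≠ 0 := by
        rw [ne_eq, Ideal.absNorm_eq_zero_iff]; exact hP0
      have h1 : Ideal.absNorm P ≠ 1 := fun h =>
        hPprime.not_unit (by simp [Ideal.isUnit_iff, Ideal.absNorm_eq_one_iff.mp h])
      omega
    obtain ⟨q, hq, hqdvd, hqmem⟩ := aux_mem_prime P hPIsPrime (Ideal.absNorm P) hN2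
      (Ideal.absNorm_mem P)
    have hq9 : q ≤ 9 := le_trans (Nat.le_of_dvd (by omega) hqdvd) (by omega)
    have hq2 := hq.two_le
    simp only [Finset.mem_union, Finset.mem_filter]
    interval_cases q
    · exact Or.inl (Or.inl (Or.inl ⟨hPS, by exact_mod_cast hqmem⟩))
    · exact Or.inl (Or.inl (Or.inr ⟨hPS, by exact_mod_cast hqmem⟩))
    · exact absurd hq (by decide)
    · exact Or.inl (Or.inr ⟨hPS, by exact_mod_cast hqmem⟩)
    · exact absurd hq (by decide)
    · exact Or.inr ⟨hPS, by exact_mod_cast hqmem⟩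
    · exact absurd hq (by decide)
    · exact absurd hq (by decide)
  have hTcard : T.card ≤ 4 * n := by
    calc T.card ≤ _ := Finset.card_le_card hTsub
    _ ≤ _ + _ := Finset.card_union_le _ _
    _ ≤ (_ + _) + _ := by
        exact Nat.add_le_add_right (Finset.card_union_le _ _) _
    _ ≤ ((_ + _) + _) + _ := by
        exact Nat.add_le_add_right (Nat.add_le_add_right (Finset.card_union_le _ _) _) _
    _ ≤ 4 * n := by
        have h2 := aux_count S hSp 2 Nat.prime_two
        have h3 := aux_count S hSp 3 Nat.prime_three
        have h5 := aux_count S hSp 5 (by norm_num)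
        have h7 := aux_count S hSp 7 (by norm_num)
        push_cast at h2 h3 h5 h7 ⊢
        omega
  -- norm bound from big factors
  have hbig : 10 ^ B.card ≤ Ideal.absNorm D := by
    rw [hNprod]
    calc 10 ^ B.card = ∏ _P ∈ B, 10 := (Finset.prod_const 10).symm
    _ ≤ ∏ P ∈ B, Ideal.absNorm P := Finset.prod_le_prod' fun P hP => by
        have := (Finset.mem_filter.mp hP).2; omega
    _ ≤ ∏ P ∈ S, Ideal.absNorm P := by
        refine Finset.prod_le_prod_of_subset_of_one_le' (Finset.filter_subset _ _) ?_
        intro P hPS _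
        have h0 : Ideal.absNorm P ≠ 0 := by
          rw [ne_eq, Ideal.absNorm_eq_zero_iff]; exact (hSp P hPS).ne_zero
        omega
  -- conclude
  have hexp : (r : ℤ) - 7 * (n : ℤ) ≤ (B.card : ℤ) := by
    have : (r : ℤ) = T.card + B.card := by exact_mod_cast hcard.symm
    have hT4 : (T.card : ℤ) ≤ 4 * n := by exact_mod_cast hTcard
    omega
  calc (10 : ℝ) ^ ((r : ℤ) - 7 * (n : ℤ)) ≤ (10 : ℝ) ^ ((B.card : ℤ)) := by
        exact zpow_le_zpow_right₀ (by norm_num) hexp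
  _ = ((10 ^ B.card : ℕ) : ℝ) := by push_cast [zpow_natCast]; ring
  _ ≤ (Ideal.absNorm D : ℝ) := by exact_mod_cast hbig
end

section
/- Let k be a number field of degree n over ℚ, let X ≥ 2 be a real number, and let D be a squarefree nonzero ideal of O_k having exactly r distinct prime ideal factors such that Φ₁(D) ≤ X. Then r ≤ max(24n, log X / log(5/4)). -/
open NumberField
open scoped Classical

/-- Φ₁(I) = ∏_{p | I} (N(p) - 1)/2, the product over the distinct prime ideal
factors of I. -/
noncomputable def Phi1 {k : Type*} [Field k] [NumberField k] (I : Ideal (𝓞 k)) : ℝ :=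
  ∏ p ∈ (UniqueFactorizationMonoid.normalizedFactors I).toFinset,
    ((Ideal.absNorm p : ℝ) - 1) / 2

/-- For a squarefree nonzero ideal D of O_k with exactly r distinct prime
ideal factors and Φ₁(D) ≤ X (where X ≥ 2), we have
r ≤ max(24n, log X / log(5/4)), where n = [k : ℚ]. -/
theorem factor_count_le_max (k : Type*) [Field k] [NumberField k]
    (X : ℝ) (hX : 2 ≤ X) (D : Ideal (𝓞 k)) (hD : D ≠ 0) (hsf : Squarefree D)
    (r : ℕ) (hr : (UniqueFactorizationMonoid.normalizedFactors D).toFinset.card = r)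
    (hPhi : Phi1 D ≤ X) :
    (r : ℝ) ≤ max (24 * (Module.finrank ℚ k : ℝ)) (Real.log X / Real.log (5 / 4)) := by
  set n := Module.finrank ℚ k with hn
  set S := (UniqueFactorizationMonoid.normalizedFactors D).toFinset with hSdef
  by_cases hcase : (r : ℝ) ≤ 24 * (n : ℝ)
  · exact le_max_of_le_left hcase
  push_neg at hcase
  -- basic facts about elements of S
  have hprime : ∀ p ∈ S, Prime p := fun p hp =>
    UniqueFactorizationMonoid.prime_of_normalized_factor p (Multiset.mem_toFinset.mp hp)
  have hnorm2 : ∀ p ∈ S, 2 ≤ Ideal.absNorm p := by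
    intro p hp
    have h0 : Ideal.absNorm p ≠ 0 := by
      simp only [ne_eq, Ideal.absNorm_eq_zero_iff]
      exact (hprime p hp).ne_zero
    have h1 : Ideal.absNorm p ≠ 1 := by
      simp only [ne_eq, Ideal.absNorm_eq_one_iff]
      intro htop
      exact (hprime p hp).not_unit (Ideal.isUnit_iff.mpr htop)
    omega
  set A := S.filter (fun p => Ideal.absNorm p ≤ 3) with hAdef
  set B := S.filter (fun p => ¬ Ideal.absNorm p ≤ 3) with hBdef
  have hsplit : A.card + B.card = r := by
    rw [hAdef, hBdef, Finset.card_filter_add_card_filter_not]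
    exact hr
  -- every p in A divides span {6}
  have hAdvd : ∀ p ∈ A, p ∣ Ideal.span {(6 : 𝓞 k)} := by
    intro p hp
    rw [Ideal.dvd_span_singleton]
    have hpS : p ∈ S := Finset.mem_filter.mp hp |>.1
    have h3 : Ideal.absNorm p ≤ 3 := (Finset.mem_filter.mp hp).2
    have h2 : 2 ≤ Ideal.absNorm p := hnorm2 p hpS
    have hmem : ((Ideal.absNorm p : 𝓞 k)) ∈ p := Ideal.absNorm_mem p
    interval_cases h : Ideal.absNorm p
    · have : (6 : 𝓞 k) = 3 * ((2 : ℕ) : 𝓞 k) := by push_cast; ring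
      rw [this]; exact Ideal.mul_mem_left p 3 hmem
    · have : (6 : 𝓞 k) = 2 * ((3 : ℕ) : 𝓞 k) := by push_cast; ring
      rw [this]; exact Ideal.mul_mem_left p 2 hmem
  -- the product of the primes in A divides span {6}
  have hproddvd : (∏ p ∈ A, p) ∣ Ideal.span {(6 : 𝓞 k)} :=
    Finset.prod_primes_dvd _ (fun p hp => hprime p (Finset.mem_filter.mp hp).1) hAdvd
  -- norm of span {6} is 6 ^ n
  have hnorm6 : Ideal.absNorm (Ideal.span {(6 : 𝓞 k)}) = 6 ^ n := by
    rw [Ideal.absNorm_span_singleton]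
    have h6 : (6 : 𝓞 k) = algebraMap ℤ (𝓞 k) 6 := by simp
    rw [h6, Algebra.norm_algebraMap_of_basis (NumberField.RingOfIntegers.basis k)]
    rw [← Module.finrank_eq_card_chooseBasisIndex, NumberField.RingOfIntegers.rank, hn]
    simp [Int.natAbs_pow]
  -- norms multiply; deduce 2 ^ |A| ≤ 6 ^ n, hence |A| ≤ 3 n
  have hAcard : A.card ≤ 3 * n := by
    have hd : (∏ p ∈ A, Ideal.absNorm p) ∣ 6 ^ n := by
      rw [← hnorm6, ← map_prod]
      exact map_dvd Ideal.absNorm hproddvd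
    have h6n : (0 : ℕ) < 6 ^ n := by positivity
    have hle : (∏ p ∈ A, Ideal.absNorm p) ≤ 6 ^ n := Nat.le_of_dvd h6n hd
    have h2a : 2 ^ A.card ≤ ∏ p ∈ A, Ideal.absNorm p := by
      rw [← Finset.prod_const]
      exact Finset.prod_le_prod' (fun p hp => hnorm2 p (Finset.mem_filter.mp hp).1)
    have : 2 ^ A.card ≤ 2 ^ (3 * n) := by
      calc 2 ^ A.card ≤ 6 ^ n := le_trans h2a hle
        _ ≤ (2 ^ 3) ^ n := by gcongr <;> norm_num
        _ = 2 ^ (3 * n) := by rw [← pow_mul, mul_comm]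
    exact (Nat.pow_le_pow_iff_right (by norm_num)).mp this
  -- hence 8 * |A| ≤ r
  have h8a : 8 * A.card ≤ r := by
    have : (24 : ℝ) * n < r := hcase
    have h24 : 24 * n < r := by exact_mod_cast this
    omega
  -- lower bound Phi1 D ≥ (1/2)^|A| * (3/2)^|B|
  have hlow : (1 / 2 : ℝ) ^ A.card * (3 / 2) ^ B.card ≤ Phi1 D := by
    rw [Phi1, ← hSdef]
    have hunion : A ∪ B = S := Finset.filter_union_filter_not_eq _ S
    have hdisj : Disjoint A B := Finset.disjoint_filter_filter_not S S _
    rw [← hunion, Finset.prod_union hdisj]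
    have hA' : (1 / 2 : ℝ) ^ A.card ≤ ∏ p ∈ A, ((Ideal.absNorm p : ℝ) - 1) / 2 := by
      rw [← Finset.prod_const]
      apply Finset.prod_le_prod (fun p hp => by positivity)
      intro p hp
      have := hnorm2 p (Finset.mem_filter.mp hp).1
      have : (2 : ℝ) ≤ (Ideal.absNorm p : ℝ) := by exact_mod_cast this
      linarith
    have hB' : (3 / 2 : ℝ) ^ B.card ≤ ∏ p ∈ B, ((Ideal.absNorm p : ℝ) - 1) / 2 := by
      rw [← Finset.prod_const]
      apply Finset.prod_le_prod (fun p hp => by positivity)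
      intro p hp
      have h4 : 4 ≤ Ideal.absNorm p := by
        have := hnorm2 p (Finset.mem_filter.mp hp).1
        have := (Finset.mem_filter.mp hp).2
        omega
      have : (4 : ℝ) ≤ (Ideal.absNorm p : ℝ) := by exact_mod_cast h4
      linarith
    exact mul_le_mul hA' hB' (by positivity) (le_trans (by positivity) hA')
  -- key inequality: (5/4)^r ≤ (1/2)^|A| * (3/2)^|B|
  have hkey : (5 / 4 : ℝ) ^ r ≤ (1 / 2) ^ A.card * (3 / 2) ^ B.card := by
    have h3a : (3 : ℝ) ^ A.card ≤ (6 / 5) ^ r := by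
      calc (3 : ℝ) ^ A.card ≤ ((6 / 5 : ℝ) ^ 8) ^ A.card := by
            gcongr; norm_num
        _ = (6 / 5 : ℝ) ^ (8 * A.card) := by rw [← pow_mul]
        _ ≤ (6 / 5 : ℝ) ^ r := by
            apply pow_le_pow_right₀ (by norm_num) h8a
    have hmul : (5 / 4 : ℝ) ^ r * 3 ^ A.card ≤ (3 / 2) ^ r := by
      calc (5 / 4 : ℝ) ^ r * 3 ^ A.card ≤ (5 / 4) ^ r * (6 / 5) ^ r := by gcongr
        _ = (3 / 2) ^ r := by rw [← mul_pow]; norm_num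
    have heq : ((1 / 2 : ℝ) ^ A.card * (3 / 2) ^ B.card) * 3 ^ A.card = (3 / 2) ^ r := by
      have hhalf : (1 / 2 : ℝ) ^ A.card * 3 ^ A.card = (3 / 2) ^ A.card := by
        rw [← mul_pow]; norm_num
      calc ((1 / 2 : ℝ) ^ A.card * (3 / 2) ^ B.card) * 3 ^ A.card
          = ((1 / 2 : ℝ) ^ A.card * 3 ^ A.card) * (3 / 2) ^ B.card := by ring
        _ = (3 / 2 : ℝ) ^ A.card * (3 / 2) ^ B.card := by rw [hhalf]
        _ = (3 / 2 : ℝ) ^ r := by rw [← pow_add, hsplit]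
    have := hmul.trans_eq heq.symm
    exact le_of_mul_le_mul_right this (by positivity)
  -- conclude via logs
  have hfinal : (5 / 4 : ℝ) ^ r ≤ X := le_trans (le_trans hkey hlow) hPhi
  apply le_max_of_le_right
  have hlog54 : 0 < Real.log (5 / 4) := Real.log_pos (by norm_num)
  rw [le_div_iff₀ hlog54]
  have := Real.log_le_log (by positivity) hfinal
  rwa [Real.log_pow] at this
end
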